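/- arXiv:1711.03034 — 7 statements merged into one kernel-verified Lean document; each statement's English description precedes it below -/
import Mathlib

section
/- Let n ≥ 1 be an integer, λ > 0 a real number, μ a real number, and t ≥ 0. Then ∫₀^t e^{-(μ + λ n) s} · e^{-μ (t-s)} (1 - e^{-λ (t-s)})^{n-1} ds = e^{-μ t} (1 - e^{-λ t})^n / (n λ). -/
open MeasureTheory Real intervalIntegral

/-!
Writing `n = m + 1`, the integrand factors as `e^{-μt} · e^{-λs} (e^{-λs} - e^{-λt})^m`, which is the
derivative of `-e^{-μt} (e^{-λs} - e^{-λt})^n / (nλ)`; this vanishes at `s = t`.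
-/

theorem integral_exp_mul_pow_exp_sub {l : ℝ} (hl : l ≠ 0) (c a b : ℝ) (m : ℕ) :
    ∫ s in a..b, exp (-l * s) * (exp (-l * s) - c) ^ m
      = ((exp (-l * a) - c) ^ (m + 1) - (exp (-l * b) - c) ^ (m + 1)) / ((m + 1) * l) := by
  have hderiv : ∀ s ∈ Set.uIcc a b, HasDerivAt
      (fun s => -(exp (-l * s) - c) ^ (m + 1) / ((m + 1) * l))
      (exp (-l * s) * (exp (-l * s) - c) ^ m) s := by
    intro s _
    have hexp : HasDerivAt (fun s => exp (-l * s)) (exp (-l * s) * -l) s := by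
      simpa using ((hasDerivAt_id s).const_mul (-l)).exp
    refine ((((hexp.sub_const c).fun_pow (m + 1)).fun_neg).div_const ((m + 1) * l)).congr_deriv ?_
    push_cast
    field_simp
  rw [integral_eq_sub_of_hasDerivAt hderiv (by apply Continuous.intervalIntegrable; fun_prop)]
  ring

theorem exp_mul_exp_mul_one_sub_exp_pow (μ l t s : ℝ) (m : ℕ) :
    exp (-(μ + l * (m + 1)) * s) * (exp (-μ * (t - s)) * (1 - exp (-l * (t - s))) ^ m)
      = exp (-μ * t) * (exp (-l * s) * (exp (-l * s) - exp (-l * t)) ^ m) := by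
  have hsplit : exp (-(μ + l * (m + 1)) * s) * exp (-μ * (t - s))
      = exp (-μ * t) * exp (-l * s) * exp (-l * s) ^ m := by
    rw [← exp_nat_mul, ← exp_add, ← exp_add, ← exp_add]
    ring_nf
  have hshift : exp (-l * s) * (1 - exp (-l * (t - s))) = exp (-l * s) - exp (-l * t) := by
    rw [mul_one_sub, ← exp_add]
    ring_nf
  rw [← hshift, mul_pow, ← mul_assoc, hsplit]
  ring

theorem convolution_exp_kernel_step_general
    (n : ℕ) (hn : 1 ≤ n) (l μ t : ℝ) (hl : 0 < l) :
    ∫ s in (0 : ℝ)..t,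
        Real.exp (-(μ + l * (n : ℝ)) * s) *
          (Real.exp (-μ * (t - s)) * (1 - Real.exp (-l * (t - s))) ^ (n - 1))
      = Real.exp (-μ * t) * (1 - Real.exp (-l * t)) ^ n / ((n : ℝ) * l) := by
  obtain ⟨m, rfl⟩ : ∃ m, n = m + 1 := ⟨n - 1, by omega⟩
  simp only [Nat.add_sub_cancel, Nat.cast_add, Nat.cast_one, exp_mul_exp_mul_one_sub_exp_pow,
    intervalIntegral.integral_const_mul, integral_exp_mul_pow_exp_sub hl.ne']
  rw [mul_zero, exp_zero, sub_self, zero_pow m.succ_ne_zero, sub_zero]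
  ring

/-- Convolution inductive step:
`∫₀^t e^{-(μ + λ n) s} · e^{-μ (t-s)} (1 - e^{-λ (t-s)})^{n-1} ds
   = e^{-μ t} (1 - e^{-λ t})^n / (n λ)`. -/
theorem convolution_exp_kernel_step
    (n : ℕ) (hn : 1 ≤ n) (l μ t : ℝ) (hl : 0 < l) (ht : 0 ≤ t) :
    ∫ s in (0 : ℝ)..t,
        Real.exp (-(μ + l * (n : ℝ)) * s) *
          (Real.exp (-μ * (t - s)) * (1 - Real.exp (-l * (t - s))) ^ (n - 1))
      = Real.exp (-μ * t) * (1 - Real.exp (-l * t)) ^ n / ((n : ℝ) * l) :=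
  convolution_exp_kernel_step_general n hn l μ t hl
end

section
/- Let d ≥ 1 be an integer and let λ > 0, μ, ζ, x₀ be real numbers. Define X_k(t) = ζ · C(d,k) · e^{-(μ + λ(d-k)) t} (1 - e^{-λ t})^k for 0 ≤ k ≤ d−1 (where C(d,k) is the binomial coefficient), and X_d(t) = e^{-μ t} ( ζ (1 - e^{-λ t})^d + x₀ ). Then for all t ∈ ℝ: X_0'(t) = -(μ + λ d) X_0(t); X_k'(t) = -(μ + λ(d-k)) X_k(t) + (d-k+1) λ X_{k-1}(t) for every 1 ≤ k ≤ d; and the initial conditions X_0(0) = ζ, X_k(0) = 0 for 1 ≤ k ≤ d−1, and X_d(0) = x₀ hold. -/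
/-!
Each `X_k` with `k < d` is a constant multiple of `e^{-r t}(1 - e^{-λ t})^k` with
`r = μ + λ(d-k)`. Differentiating such a profile gives `-r` times itself plus
`kλ e^{-(r+λ) t}(1 - e^{-λ t})^{k-1}`, and the second term is `(d-k+1)λ X_{k-1}` by
`C(d,k) k = C(d,k-1)(d-k+1)`. For `X_d` the extra summand `x₀ e^{-μ t}` only feeds the
decay term `-μ X_d`.
-/

open Real

noncomputable def dampedGrowth (r l : ℝ) (k : ℕ) (t : ℝ) : ℝ :=
  exp (-r * t) * (1 - exp (-l * t)) ^ k

theorem hasDerivAt_dampedGrowth (r l : ℝ) (k : ℕ) (t : ℝ) :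
    HasDerivAt (dampedGrowth r l k)
      (-r * dampedGrowth r l k t + k * l * dampedGrowth (r + l) l (k - 1) t) t := by
  have hdecay : HasDerivAt (fun s => exp (-r * s)) (exp (-r * t) * -r) t := by
    simpa using ((hasDerivAt_id t).const_mul (-r)).exp
  have hgrowth : HasDerivAt (fun s => 1 - exp (-l * s)) (-(exp (-l * t) * -l)) t := by
    simpa using (((hasDerivAt_id t).const_mul (-l)).exp).const_sub 1
  have hsplit : exp (-(r + l) * t) = exp (-r * t) * exp (-l * t) := by
    rw [← exp_add]; ring_nf
  refine (hdecay.fun_mul (hgrowth.fun_pow k)).congr_deriv ?_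
  simp only [dampedGrowth, hsplit]
  ring

@[simp]
theorem dampedGrowth_apply_zero (r l : ℝ) (k : ℕ) : dampedGrowth r l k 0 = 0 ^ k := by
  simp [dampedGrowth]

@[simp]
theorem dampedGrowth_zero (r l t : ℝ) : dampedGrowth r l 0 t = exp (-r * t) := by
  simp [dampedGrowth]

theorem Nat.cast_choose_mul_eq_choose_pred_mul {d k : ℕ} (hk : 1 ≤ k) (hkd : k ≤ d) :
    (d.choose k : ℝ) * k = d.choose (k - 1) * (((d - k : ℕ) : ℝ) + 1) := by
  obtain ⟨j, rfl⟩ : ∃ j, k = j + 1 := ⟨k - 1, by omega⟩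
  have hsub : d - j = d - (j + 1) + 1 := by omega
  have := Nat.choose_succ_right_eq d j
  rw [hsub] at this
  exact_mod_cast this

section Regeneration

variable (d : ℕ) (l μ ζ : ℝ)

noncomputable def regenComponent (k : ℕ) (t : ℝ) : ℝ :=
  ζ * d.choose k * dampedGrowth (μ + l * ((d - k : ℕ) : ℝ)) l k t

variable {d}

theorem hasDerivAt_regenComponent' (k : ℕ) (t : ℝ) :
    HasDerivAt (regenComponent d l μ ζ k)
      (-(μ + l * ((d - k : ℕ) : ℝ)) * regenComponent d l μ ζ k t +
        l * (ζ * d.choose k * k *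
          dampedGrowth (μ + l * ((d - k : ℕ) : ℝ) + l) l (k - 1) t)) t :=
  ((hasDerivAt_dampedGrowth _ l k t).const_mul (ζ * d.choose k)).congr_deriv
    (by rw [regenComponent]; ring)

theorem hasDerivAt_regenComponent_zero (t : ℝ) :
    HasDerivAt (regenComponent d l μ ζ 0) (-(μ + l * d) * regenComponent d l μ ζ 0 t) t := by
  simpa using hasDerivAt_regenComponent' l μ ζ 0 t

theorem sub_add_one_mul_regenComponent_pred {k : ℕ} (hk : 1 ≤ k) (hkd : k ≤ d) (t : ℝ) :
    (((d - k : ℕ) : ℝ) + 1) * regenComponent d l μ ζ (k - 1) t =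
      ζ * d.choose k * k * dampedGrowth (μ + l * ((d - k : ℕ) : ℝ) + l) l (k - 1) t := by
  have hrate : μ + l * ((d - (k - 1) : ℕ) : ℝ) = μ + l * ((d - k : ℕ) : ℝ) + l := by
    rw [show d - (k - 1) = d - k + 1 by omega]; push_cast; ring
  rw [regenComponent, hrate, mul_assoc ζ (d.choose k : ℝ),
    Nat.cast_choose_mul_eq_choose_pred_mul hk hkd]
  ring

theorem hasDerivAt_regenComponent {k : ℕ} (hk : 1 ≤ k) (hkd : k ≤ d) (t : ℝ) :
    HasDerivAt (regenComponent d l μ ζ k)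
      (-(μ + l * ((d - k : ℕ) : ℝ)) * regenComponent d l μ ζ k t +
        (((d - k : ℕ) : ℝ) + 1) * l * regenComponent d l μ ζ (k - 1) t) t :=
  (hasDerivAt_regenComponent' l μ ζ k t).congr_deriv
    (by rw [mul_right_comm _ l, sub_add_one_mul_regenComponent_pred l μ ζ hk hkd]; ring)

theorem regenComponent_apply_zero (k : ℕ) :
    regenComponent d l μ ζ k 0 = ζ * d.choose k * 0 ^ k := by
  simp [regenComponent]

end Regeneration

theorem regeneration_closed_form_null_control_general
    (d : ℕ) (hd : 1 ≤ d) (l μ ζ x₀ : ℝ)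
    (X : ℕ → ℝ → ℝ)
    (hXk : ∀ k, k ≤ d - 1 → ∀ t : ℝ,
      X k t = ζ * (d.choose k : ℝ) * Real.exp (-(μ + l * ((d - k : ℕ) : ℝ)) * t) *
        (1 - Real.exp (-l * t)) ^ k)
    (hXd : ∀ t : ℝ,
      X d t = Real.exp (-μ * t) * (ζ * (1 - Real.exp (-l * t)) ^ d + x₀)) :
    (∀ t : ℝ, HasDerivAt (X 0) (-(μ + l * (d : ℝ)) * X 0 t) t) ∧
    (∀ k, 1 ≤ k → k ≤ d → ∀ t : ℝ,
      HasDerivAt (X k)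
        (-(μ + l * ((d - k : ℕ) : ℝ)) * X k t + (((d - k : ℕ) : ℝ) + 1) * l * X (k - 1) t) t) ∧
    X 0 0 = ζ ∧ (∀ k, 1 ≤ k → k ≤ d - 1 → X k 0 = 0) ∧ X d 0 = x₀ := by
  have hXk' : ∀ k ≤ d - 1, X k = regenComponent d l μ ζ k :=
    fun k hk => funext fun t => by rw [hXk k hk t, regenComponent, dampedGrowth, ← mul_assoc]
  have hXd' : X d = fun t => regenComponent d l μ ζ d t + x₀ * dampedGrowth μ l 0 t :=
    funext fun t => by
      simp only [hXd, regenComponent, dampedGrowth, Nat.sub_self, Nat.choose_self, Nat.cast_zero,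
        Nat.cast_one, mul_zero, add_zero, pow_zero]
      ring
  refine ⟨fun t => ?_, fun k hk hkd t => ?_, ?_, fun k hk hkd => ?_, ?_⟩
  · rw [hXk' 0 (Nat.zero_le _)]
    exact hasDerivAt_regenComponent_zero l μ ζ t
  · rw [hXk' (k - 1) (by omega)]
    rcases Nat.lt_or_eq_of_le hkd with hlt | rfl
    · rw [hXk' k (by omega)]
      exact hasDerivAt_regenComponent l μ ζ hk hkd t
    · rw [hXd']
      refine ((hasDerivAt_regenComponent l μ ζ hk le_rfl t).fun_add
        ((hasDerivAt_dampedGrowth μ l 0 t).const_mul x₀)).congr_deriv ?_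
      simp only [Nat.sub_self, Nat.cast_zero, mul_zero, add_zero, dampedGrowth_zero]
      ring
  · simp [hXk' 0 (Nat.zero_le _), regenComponent_apply_zero]
  · simp [hXk' k hkd, regenComponent_apply_zero, zero_pow (show k ≠ 0 by omega)]
  · simp [hXd', regenComponent_apply_zero, zero_pow (show d ≠ 0 by omega)]

/-- The closed-form functions
`X_k(t) = ζ C(d,k) e^{-(μ+λ(d-k))t}(1-e^{-λ t})^k` for `0 ≤ k ≤ d-1` and
`X_d(t) = e^{-μ t}(ζ(1-e^{-λ t})^d + x₀)` solve the homogeneous regeneration ODE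
system (null control) with initial conditions `X_0(0)=ζ`, `X_k(0)=0` for
`1 ≤ k ≤ d-1` and `X_d(0)=x₀`. -/
theorem regeneration_closed_form_null_control
    (d : ℕ) (hd : 1 ≤ d) (l μ ζ x₀ : ℝ) (hl : 0 < l)
    (X : ℕ → ℝ → ℝ)
    (hXk : ∀ k, k ≤ d - 1 → ∀ t : ℝ,
      X k t = ζ * (d.choose k : ℝ) * Real.exp (-(μ + l * ((d - k : ℕ) : ℝ)) * t) *
        (1 - Real.exp (-l * t)) ^ k)
    (hXd : ∀ t : ℝ,
      X d t = Real.exp (-μ * t) * (ζ * (1 - Real.exp (-l * t)) ^ d + x₀)) :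
    (∀ t : ℝ, HasDerivAt (X 0) (-(μ + l * (d : ℝ)) * X 0 t) t) ∧
    (∀ k, 1 ≤ k → k ≤ d → ∀ t : ℝ,
      HasDerivAt (X k)
        (-(μ + l * ((d - k : ℕ) : ℝ)) * X k t + (((d - k : ℕ) : ℝ) + 1) * l * X (k - 1) t) t) ∧
    X 0 0 = ζ ∧ (∀ k, 1 ≤ k → k ≤ d - 1 → X k 0 = 0) ∧ X d 0 = x₀ :=
  regeneration_closed_form_null_control_general d hd l μ ζ x₀ X hXk hXd
end

section
/- Let d ≥ 1 be an integer and let λ > 0, μ, ζ, x₀ be real numbers. Define h_k(s) = C(d,k) e^{-(μ + λ(d-k)) s} (1 - e^{-λ s})^k for 0 ≤ k ≤ d, X_k(t) = ζ ∫₀^t h_k(s) ds for 0 ≤ k ≤ d−1, and X_d(t) = e^{-μ t} x₀ + ζ ∫₀^t e^{-μ s} (1 - e^{-λ s})^d ds. Then for all t ≥ 0: X_0'(t) = -(μ + λ d) X_0(t) + ζ; X_k'(t) = -(μ + λ(d-k)) X_k(t) + (d-k+1) λ X_{k-1}(t) for every 1 ≤ k ≤ d; and X_k(0) = 0 for 0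 ≤ k ≤ d−1 while X_d(0) = x₀. -/
/-!
The kernels `h_k` satisfy `h_k' = -(μ + λ(d-k)) h_k + (d-k+1) λ h_{k-1}` for `k ≥ 1` and
`h_0' = -(μ + λd) h_0`; the factor `d-k+1` comes from `C(d,k) k = C(d,k-1) (d-k+1)`.
Integrating from `0`, where `h_0 = 1` and `h_k = 0` for `k ≥ 1`, expresses `h_k(t)` through
`∫₀ᵗ h_k` and `∫₀ᵗ h_{k-1}`; since `X_k' = ζ h_k` (plus `-μ e^{-μt} x₀` when `k = d`),
this is the system.
-/

open MeasureTheory Real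

lemma hasDerivAt_exp_const_mul (a s : ℝ) :
    HasDerivAt (fun u => exp (a * u)) (a * exp (a * s)) s := by
  simpa [mul_comm] using ((hasDerivAt_id s).const_mul a).exp

lemma hasDerivAt_exp_mul_add_integral {f g : ℝ → ℝ} {r : ℝ}
    (hf : ∀ s, HasDerivAt f (-r * f s + g s) s) (hg : Continuous g) (c ζ t : ℝ) :
    HasDerivAt (fun u => exp (-r * u) * c + ζ * ∫ s in (0 : ℝ)..u, f s)
      (-r * (exp (-r * t) * c + ζ * ∫ s in (0 : ℝ)..t, f s)
        + ζ * (f 0 + ∫ s in (0 : ℝ)..t, g s)) t := by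
  have hf_cont : Continuous f := continuous_iff_continuousAt.2 fun s => (hf s).continuousAt
  have hprim := ((hf_cont.integral_hasStrictDerivAt 0 t).hasDerivAt.const_mul ζ)
  have hftc : ∫ s in (0 : ℝ)..t, (-r * f s + g s) = f t - f 0 :=
    intervalIntegral.integral_eq_sub_of_hasDerivAt (fun s _ => hf s)
      ((by fun_prop : Continuous fun s => -r * f s + g s).intervalIntegrable 0 t)
  rw [intervalIntegral.integral_add
    ((by fun_prop : Continuous fun s => -r * f s).intervalIntegrable 0 t)
    (hg.intervalIntegrable 0 t), intervalIntegral.integral_const_mul] at hftc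
  refine (((hasDerivAt_exp_const_mul (-r) t).mul_const c).add hprim).congr_deriv ?_
  linear_combination -ζ * hftc

lemma hasDerivAt_exp_mul_one_sub_exp_pow_succ (r l : ℝ) (j : ℕ) (s : ℝ) :
    HasDerivAt (fun u => exp (-r * u) * (1 - exp (-l * u)) ^ (j + 1))
      (-r * (exp (-r * s) * (1 - exp (-l * s)) ^ (j + 1))
        + (j + 1) * l * (exp (-(r + l) * s) * (1 - exp (-l * s)) ^ j)) s := by
  refine ((hasDerivAt_exp_const_mul (-r) s).mul
    (((hasDerivAt_exp_const_mul (-l) s).const_sub 1).pow (j + 1))).congr_deriv ?_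
  rw [show -(r + l) * s = -r * s + -l * s by ring, exp_add]
  simp only [Pi.pow_apply]
  push_cast
  ring

/-- The integrand `h_k` of the closed form. -/
noncomputable def regenKernel (d k : ℕ) (l μ s : ℝ) : ℝ :=
  (d.choose k : ℝ) * exp (-(μ + l * ((d - k : ℕ) : ℝ)) * s) * (1 - exp (-l * s)) ^ k

lemma continuous_regenKernel (d k : ℕ) (l μ : ℝ) : Continuous (regenKernel d k l μ) := by
  unfold regenKernel
  fun_prop

lemma regenKernel_zero (d : ℕ) (l μ s : ℝ) :
    regenKernel d 0 l μ s = exp (-(μ + l * d) * s) := by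
  simp [regenKernel]

lemma regenKernel_succ_apply_zero (d j : ℕ) (l μ : ℝ) : regenKernel d (j + 1) l μ 0 = 0 := by
  simp [regenKernel]

lemma regenKernel_self (d : ℕ) (l μ s : ℝ) :
    regenKernel d d l μ s = exp (-μ * s) * (1 - exp (-l * s)) ^ d := by
  simp [regenKernel]

lemma hasDerivAt_regenKernel_zero (d : ℕ) (l μ s : ℝ) :
    HasDerivAt (regenKernel d 0 l μ) (-(μ + l * d) * regenKernel d 0 l μ s) s := by
  simp only [funext (regenKernel_zero d l μ)]
  exact hasDerivAt_exp_const_mul _ s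

lemma hasDerivAt_regenKernel_succ {d j : ℕ} (hj : j + 1 ≤ d) (l μ s : ℝ) :
    HasDerivAt (regenKernel d (j + 1) l μ)
      (-(μ + l * ((d - (j + 1) : ℕ) : ℝ)) * regenKernel d (j + 1) l μ s
        + (((d - (j + 1) : ℕ) : ℝ) + 1) * l * regenKernel d j l μ s) s := by
  have hpascal : (d.choose (j + 1) : ℝ) * (j + 1) = d.choose j * ((d - (j + 1) : ℕ) + 1) := by
    have hdj : ((d - (j + 1) : ℕ) : ℝ) + 1 = ((d - j : ℕ) : ℝ) := by
      rw [← Nat.cast_succ, show (d - (j + 1)).succ = d - j by omega]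
    rw [hdj]
    exact_mod_cast Nat.choose_succ_right_eq d j
  have hrate : -(μ + l * ((d - (j + 1) : ℕ) : ℝ) + l) = -(μ + l * ((d - j : ℕ) : ℝ)) := by
    rw [show d - j = d - (j + 1) + 1 by omega]
    push_cast
    ring
  have key := (hasDerivAt_exp_mul_one_sub_exp_pow_succ
    (μ + l * ((d - (j + 1) : ℕ) : ℝ)) l j s).const_mul (d.choose (j + 1) : ℝ)
  rw [hrate] at key
  have hfun : regenKernel d (j + 1) l μ = fun u => (d.choose (j + 1) : ℝ) *
      (exp (-(μ + l * ((d - (j + 1) : ℕ) : ℝ)) * u) * (1 - exp (-l * u)) ^ (j + 1)) := by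
    funext u
    simp only [regenKernel]
    ring
  rw [hfun]
  refine key.congr_deriv ?_
  simp only [regenKernel]
  linear_combination l * exp (-(μ + l * ((d - j : ℕ) : ℝ)) * s)
      * (1 - exp (-l * s)) ^ j * hpascal

theorem regeneration_closed_form_full_control_general
    (d : ℕ) (l μ ζ x₀ : ℝ)
    (h : ℕ → ℝ → ℝ)
    (hh : ∀ k, k ≤ d → ∀ s : ℝ,
      h k s = (d.choose k : ℝ) * Real.exp (-(μ + l * ((d - k : ℕ) : ℝ)) * s) *
        (1 - Real.exp (-l * s)) ^ k)
    (X : ℕ → ℝ → ℝ)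
    (hXk : ∀ k, k ≤ d - 1 → ∀ t : ℝ, X k t = ζ * ∫ s in (0 : ℝ)..t, h k s)
    (hXd : ∀ t : ℝ,
      X d t = Real.exp (-μ * t) * x₀ +
        ζ * ∫ s in (0 : ℝ)..t, Real.exp (-μ * s) * (1 - Real.exp (-l * s)) ^ d) :
    (∀ t : ℝ, 0 ≤ t → HasDerivAt (X 0) (-(μ + l * (d : ℝ)) * X 0 t + ζ) t) ∧
    (∀ k, 1 ≤ k → k ≤ d → ∀ t : ℝ, 0 ≤ t →
      HasDerivAt (X k)
        (-(μ + l * ((d - k : ℕ) : ℝ)) * X k t + (((d - k : ℕ) : ℝ) + 1) * l * X (k - 1) t) t) ∧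
    (∀ k, k ≤ d - 1 → X k 0 = 0) ∧ X d 0 = x₀ := by
  have hX : ∀ k, k ≤ d - 1 → ∀ t, X k t = ζ * ∫ s in (0 : ℝ)..t, regenKernel d k l μ s :=
    fun k hk t => by simp only [hXk k hk t, hh k (by omega), regenKernel]
  have hform : ∀ k, k ≤ d → ∃ c, X k = fun t => exp (-(μ + l * ((d - k : ℕ) : ℝ)) * t) * c
      + ζ * ∫ s in (0 : ℝ)..t, regenKernel d k l μ s := by
    intro k hk
    by_cases hkd : k ≤ d - 1
    · exact ⟨0, funext fun t => by simp [hX k hkd t]⟩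
    · obtain rfl : k = d := by omega
      exact ⟨x₀, funext fun t => by simp [hXd t, regenKernel_self]⟩
  refine ⟨fun t _ => ?_, fun k hk1 hkd t _ => ?_, fun k hk => by simp [hXk k hk 0],
    by simp [hXd 0]⟩
  · obtain ⟨c, hc⟩ := hform 0 (Nat.zero_le d)
    rw [hc]
    refine (hasDerivAt_exp_mul_add_integral (g := fun _ => 0)
      (fun s => (hasDerivAt_regenKernel_zero d l μ s).congr_deriv (by simp)) continuous_const
      c ζ t).congr_deriv ?_
    simp [regenKernel_zero]
  · obtain ⟨j, rfl⟩ : ∃ j, k = j + 1 := ⟨k - 1, by omega⟩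
    obtain ⟨c, hc⟩ := hform (j + 1) hkd
    rw [hc]
    refine (hasDerivAt_exp_mul_add_integral (hasDerivAt_regenKernel_succ hkd l μ)
      (continuous_const.mul (continuous_regenKernel d j l μ)) c ζ t).congr_deriv ?_
    simp only [Nat.add_sub_cancel, hX j (by omega) t, regenKernel_succ_apply_zero,
      intervalIntegral.integral_const_mul]
    ring

/-- Exact solution of the regeneration ODE system under the maximal activation
control `u ≡ 1`, with `X_k(0) = 0` for `k ≤ d-1` and `X_d(0) = x₀`. -/
theorem regeneration_closed_form_full_control
    (d : ℕ) (hd : 1 ≤ d) (l μ ζ x₀ : ℝ) (hl : 0 < l)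
    (h : ℕ → ℝ → ℝ)
    (hh : ∀ k, k ≤ d → ∀ s : ℝ,
      h k s = (d.choose k : ℝ) * Real.exp (-(μ + l * ((d - k : ℕ) : ℝ)) * s) *
        (1 - Real.exp (-l * s)) ^ k)
    (X : ℕ → ℝ → ℝ)
    (hXk : ∀ k, k ≤ d - 1 → ∀ t : ℝ, X k t = ζ * ∫ s in (0 : ℝ)..t, h k s)
    (hXd : ∀ t : ℝ,
      X d t = Real.exp (-μ * t) * x₀ +
        ζ * ∫ s in (0 : ℝ)..t, Real.exp (-μ * s) * (1 - Real.exp (-l * s)) ^ d) :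
    (∀ t : ℝ, 0 ≤ t → HasDerivAt (X 0) (-(μ + l * (d : ℝ)) * X 0 t + ζ) t) ∧
    (∀ k, 1 ≤ k → k ≤ d → ∀ t : ℝ, 0 ≤ t →
      HasDerivAt (X k)
        (-(μ + l * ((d - k : ℕ) : ℝ)) * X k t + (((d - k : ℕ) : ℝ) + 1) * l * X (k - 1) t) t) ∧
    (∀ k, k ≤ d - 1 → X k 0 = 0) ∧ X d 0 = x₀ :=
  regeneration_closed_form_full_control_general d l μ ζ x₀ h hh X hXk hXd
end

section
/- Let d ≥ 1 be an integer and λ > 0, μ > 0, γ > 0, c₁ > 0 real numbers. Define φ : (0,1) → ℝ by φ(z) = γ (1 - z)^d z^{μ/λ}, and set z* = μ/(μ + dλ). Then φ is strictly increasing on (0, z*], strictly decreasing on [z*, 1), and if φ(z*) > c₁ there exist unique z_on ∈ (0, z*) and z_off ∈ (z*, 1) with φ(z_on) = φ(z_off) = c₁, and moreover { z ∈ (0,1) : φ(z) > c₁ } = (z_on, z_off). -/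
/-!
With `α = μ/λ`, the logarithmic derivative of `(1 - z)^d z^α` is `α/z - d/(1 - z)`, which
has the sign of `z* - z`. Hence `φ` is strictly increasing on `[0, z*]` and strictly decreasing
on `[z*, 1]`, with `φ 0 = φ 1 = 0 < c₁`; the intermediate value theorem on each branch gives
the two crossings of the level `c₁`, and strict monotonicity makes them unique and cuts out
the superlevel set.
-/

open Set

theorem hasDerivAt_one_sub_pow_mul_rpow (d : ℕ) (α : ℝ) {z : ℝ} (hz₀ : 0 < z)
    (hz₁ : z < 1) :
    HasDerivAt (fun z : ℝ => (1 - z) ^ d * z ^ α)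
      ((1 - z) ^ d * z ^ α * (α / z - d / (1 - z))) z := by
  have hpow : HasDerivAt (fun z : ℝ => (1 - z) ^ d) (-(d * (1 - z) ^ d / (1 - z))) z := by
    refine ((hasDerivAt_pow d (1 - z)).comp z ((hasDerivAt_id z).const_sub 1)).congr_deriv ?_
    rcases d with _ | d
    · simp
    · rw [pow_succ, mul_div_assoc, mul_div_cancel_right₀ _ (sub_ne_zero.2 hz₁.ne')]
      simp
  refine (hpow.mul (Real.hasDerivAt_rpow_const (p := α) (Or.inl hz₀.ne'))).congr_deriv ?_
  rw [Real.rpow_sub_one hz₀.ne']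
  ring

theorem div_sub_div_one_sub_eq (α d : ℝ) {z : ℝ} (hz₀ : z ≠ 0) (hz₁ : z ≠ 1)
    (hαd : α + d ≠ 0) :
    α / z - d / (1 - z) = (α + d) * (α / (α + d) - z) / (z * (1 - z)) := by
  field_simp [sub_ne_zero.2 hz₁.symm]
  ring

section

variable (d : ℕ) {α : ℝ}

theorem deriv_one_sub_pow_mul_rpow_eq (hα : 0 < α) {z : ℝ} (hz₀ : 0 < z) (hz₁ : z < 1) :
    deriv (fun z : ℝ => (1 - z) ^ d * z ^ α) z =
      (1 - z) ^ d * z ^ α * ((α + d) * (α / (α + d) - z) / (z * (1 - z))) := by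
  rw [(hasDerivAt_one_sub_pow_mul_rpow d α hz₀ hz₁).deriv,
    div_sub_div_one_sub_eq α d hz₀.ne' hz₁.ne (by positivity)]

theorem strictMonoOn_one_sub_pow_mul_rpow (hα : 0 < α) :
    StrictMonoOn (fun z : ℝ => (1 - z) ^ d * z ^ α) (Icc 0 (α / (α + d))) := by
  have hle : α / (α + d) ≤ 1 := div_le_one_of_le₀ (by simp) (by positivity)
  refine strictMonoOn_of_deriv_pos (convex_Icc _ _) (by fun_prop (disch := positivity)) ?_
  intro z hz
  rw [interior_Icc] at hz
  obtain ⟨hz₀, hz⟩ := hz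
  have hz₁ : z < 1 := hz.trans_le hle
  rw [deriv_one_sub_pow_mul_rpow_eq d hα hz₀ hz₁]
  have : 0 < 1 - z := sub_pos.2 hz₁
  have : 0 < α / (α + d) - z := sub_pos.2 hz
  positivity

theorem strictAntiOn_one_sub_pow_mul_rpow (hα : 0 < α) :
    StrictAntiOn (fun z : ℝ => (1 - z) ^ d * z ^ α) (Icc (α / (α + d)) 1) := by
  refine strictAntiOn_of_deriv_neg (convex_Icc _ _) (by fun_prop (disch := positivity)) ?_
  intro z hz
  rw [interior_Icc] at hz
  obtain ⟨hz, hz₁⟩ := hz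
  have hz₀ : 0 < z := lt_trans (by positivity) hz
  rw [deriv_one_sub_pow_mul_rpow_eq d hα hz₀ hz₁]
  have : 0 < 1 - z := sub_pos.2 hz₁
  refine mul_neg_of_pos_of_neg (by positivity) (div_neg_of_neg_of_pos ?_ (by positivity))
  exact mul_neg_of_pos_of_neg (by positivity) (sub_neg.2 hz)

end

theorem setOf_lt_apply_eq_Ioo_of_unimodal {α β : Type*} [LinearOrder α] [LinearOrder β]
    {f : α → β} {a m b x y : α} {c : β}
    (hmono : StrictMonoOn f (Icc a m)) (hanti : StrictAntiOn f (Icc m b))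
    (hx : x ∈ Icc a m) (hy : y ∈ Icc m b) (hfx : f x = c) (hfy : f y = c) :
    {z ∈ Ioo a b | c < f z} = Ioo x y := by
  ext z
  simp only [mem_ofPred_eq, mem_Ioo]
  constructor
  · rintro ⟨⟨haz, hzb⟩, hcz⟩
    constructor
    · by_contra! hzx
      have := hmono.monotoneOn ⟨haz.le, hzx.trans hx.2⟩ hx hzx
      exact (hcz.trans_le (this.trans hfx.le)).false
    · by_contra! hyz
      have := hanti.antitoneOn hy ⟨hy.1.trans hyz, hzb.le⟩ hyz
      exact (hcz.trans_le (this.trans hfy.le)).false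
  · rintro ⟨hxz, hzy⟩
    refine ⟨⟨hx.1.trans_lt hxz, hzy.trans_le hy.2⟩, ?_⟩
    rcases le_or_gt z m with hzm | hmz
    · exact hfx ▸ hmono hx ⟨hx.1.trans hxz.le, hzm⟩ hxz
    · exact hfy ▸ hanti ⟨hmz.le, hzy.le.trans hy.2⟩ hy hzy

/-- Structure of the switching equation `φ(z) = c₁` with
`φ(z) = γ(1-z)^d z^{μ/λ}` on `(0,1)`: `φ` increases up to `z* = μ/(μ+dλ)`,
decreases afterwards, and if `φ(z*) > c₁` there are exactly two solutions
`z_on ∈ (0,z*)`, `z_off ∈ (z*,1)`, and `{z ∈ (0,1) : φ(z) > c₁} = (z_on, z_off)`. -/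
theorem switching_equation_two_solutions
    (d : ℕ) (hd : 1 ≤ d) (l μ γ c₁ : ℝ)
    (hl : 0 < l) (hμ : 0 < μ) (hγ : 0 < γ) (hc₁ : 0 < c₁)
    (φ : ℝ → ℝ) (hφ : ∀ z : ℝ, φ z = γ * (1 - z) ^ d * z ^ (μ / l))
    (zstar : ℝ) (hz : zstar = μ / (μ + (d : ℝ) * l)) :
    StrictMonoOn φ (Set.Ioc 0 zstar) ∧
    StrictAntiOn φ (Set.Ico zstar 1) ∧
    (c₁ < φ zstar →
      ∃ zon zoff : ℝ,
        zon ∈ Set.Ioo 0 zstar ∧ zoff ∈ Set.Ioo zstar 1 ∧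
        φ zon = c₁ ∧ φ zoff = c₁ ∧
        (∀ z ∈ Set.Ioo 0 zstar, φ z = c₁ → z = zon) ∧
        (∀ z ∈ Set.Ioo zstar 1, φ z = c₁ → z = zoff) ∧
        {z ∈ Set.Ioo (0 : ℝ) 1 | c₁ < φ z} = Set.Ioo zon zoff) := by
  have hα : 0 < μ / l := div_pos hμ hl
  have hzstar : zstar = μ / l / (μ / l + d) := by rw [hz]; field_simp
  obtain rfl : φ = fun z => γ * ((1 - z) ^ d * z ^ (μ / l)) :=
    funext fun z => by rw [hφ, mul_assoc]
  have hmono := (strictMono_mul_left_of_pos hγ).comp_strictMonoOn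
    (hzstar ▸ strictMonoOn_one_sub_pow_mul_rpow d hα)
  have hanti := (strictMono_mul_left_of_pos hγ).comp_strictAntiOn
    (hzstar ▸ strictAntiOn_one_sub_pow_mul_rpow d hα)
  refine ⟨hmono.mono Ioc_subset_Icc_self, hanti.mono Ico_subset_Icc_self, fun hc => ?_⟩
  have hz₀ : 0 < zstar := by rw [hz]; positivity
  have hz₁ : zstar < 1 := by
    rw [hz, div_lt_one (by positivity)]
    exact lt_add_of_pos_right μ (by positivity)
  have hcont : Continuous fun z : ℝ => γ * ((1 - z) ^ d * z ^ (μ / l)) := by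
    fun_prop (disch := positivity)
  obtain ⟨zon, hzon, hφzon⟩ := intermediate_value_Ioo hz₀.le hcont.continuousOn
    (show c₁ ∈ Ioo _ _ by simpa [Real.zero_rpow hα.ne'] using ⟨hc₁, hc⟩)
  obtain ⟨zoff, hzoff, hφzoff⟩ := intermediate_value_Ioo' hz₁.le hcont.continuousOn
    (show c₁ ∈ Ioo _ _ by simpa [zero_pow (by omega : d ≠ 0)] using ⟨hc₁, hc⟩)
  have hzon' := Ioo_subset_Icc_self hzon
  have hzoff' := Ioo_subset_Icc_self hzoff
  refine ⟨zon, zoff, hzon, hzoff, hφzon, hφzoff,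
    fun z hzI hφz => hmono.injOn (Ioo_subset_Icc_self hzI) hzon' (hφz.trans hφzon.symm),
    fun z hzI hφz => hanti.injOn (Ioo_subset_Icc_self hzI) hzoff' (hφz.trans hφzoff.symm),
    setOf_lt_apply_eq_Ioo_of_unimodal hmono hanti hzon' hzoff' hφzon hφzoff⟩
end

section
/- Let d ≥ 1 be an integer and λ > 0, μ > 0, γ > 0, c₁ > 0, T > 0 real numbers, and define p̄₀(t) = -γ (1 - e^{-λ(T-t)})^d e^{-μ(T-t)} for t ≤ T. Then: (a) for every t < T, p̄₀(t) < -c₁ if and only if z := e^{-λ(T-t)} satisfies γ(1-z)^d z^{μ/λ} > c₁; (b) the set S = { t ≤ T : p̄₀(t) < -c₁ } is either empty or an open interval (t_on, t_off) with t_off < T, where t_on = T + (1/λ) ln z_on and t_off = T + (1/λ) ln z_off for the two solutions z_on < z_off in (0,1) of γ(1-z)^d z^{μ/λ} = c₁; (c) 0 ∈ S if and only if μ T < d · ln( (γ/c₁)^{1/d} (1 - e^{-λ T}) ). -/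
open Real Set

/-!
Substituting `z = e^{-λ(T-t)}`, an increasing bijection of `(-∞, T)` onto `(0, 1)`, turns
`p̄₀(t)` into `-γ(1-z)^d z^{μ/λ}`. The logarithm of `γ(1-z)^d z^{μ/λ}` is concave on `(0, 1)`, so
its strict superlevel set at `c₁` is convex and open, hence an open interval; since the function
vanishes at `z = 0` and `z = 1`, the endpoints are interior solutions of `γ(1-z)^d z^{μ/λ} = c₁`.
Pulling this interval back to the time axis gives `(t_on, t_off)`, and taking logarithms at
`t = 0` gives the criterion (c).
-/

theorem IsOpen.eq_Ioo_csInf_csSup {α : Type*} [ConditionallyCompleteLinearOrder α]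
    [TopologicalSpace α] [OrderTopology α] [DenselyOrdered α] [NoMinOrder α] [NoMaxOrder α]
    {s : Set α} (hs : IsOpen s) (hc : IsConnected s) (hb : BddBelow s) (ha : BddAbove s) :
    s = Ioo (sInf s) (sSup s) := by
  refine subset_antisymm (fun x hx => ?_) (hc.Ioo_csInf_csSup_subset hb ha)
  obtain ⟨l, u, ⟨hlx, hxu⟩, hlu⟩ := mem_nhds_iff_exists_Ioo_subset.1 (hs.mem_nhds hx)
  obtain ⟨y, hly, hyx⟩ := exists_between hlx
  obtain ⟨z, hxz, hzu⟩ := exists_between hxu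
  exact ⟨(csInf_le hb (hlu ⟨hly, hyx.trans hxu⟩)).trans_lt hyx,
    hxz.trans_le (le_csSup ha (hlu ⟨hlx.trans hxz, hzu⟩))⟩

theorem Continuous.endpoints_of_superlevel_eq_Ioo {f : ℝ → ℝ} (hf : Continuous f)
    {u v a b c : ℝ} (hu : f u < c) (hv : f v < c) (hab : a < b)
    (h : {z ∈ Ioo u v | c < f z} = Ioo a b) :
    a ∈ Ioo u v ∧ b ∈ Ioo u v ∧ f a = c ∧ f b = c := by
  obtain ⟨hua, hbv⟩ := (Ioo_subset_Ioo_iff hab).1 (h ▸ sep_subset _ _)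
  have hge : Icc a b ⊆ {z | c ≤ f z} := by
    rw [← closure_Ioo hab.ne, ← h]
    exact closure_minimal (fun z hz => hz.2.le) (isClosed_le continuous_const hf)
  have hfa := hge (left_mem_Icc.2 hab.le)
  have hfb := hge (right_mem_Icc.2 hab.le)
  have hua' : u < a := hua.lt_of_ne (by rintro rfl; exact (hfa.trans_lt hu).false)
  have hbv' : b < v := hbv.lt_of_ne' (by rintro rfl; exact (hfb.trans_lt hv).false)
  have haI : a ∈ Ioo u v := ⟨hua', hab.trans hbv'⟩
  have hbI : b ∈ Ioo u v := ⟨hua'.trans hab, hbv'⟩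
  have hnot : ∀ z ∈ Ioo u v, z ∉ Ioo a b → f z ≤ c := fun z hz hzab =>
    not_lt.1 fun hlt => hzab (h ▸ ⟨hz, hlt⟩)
  exact ⟨haI, hbI, (hnot a haI fun hm => hm.1.false).antisymm hfa,
    (hnot b hbI fun hm => hm.2.false).antisymm hfb⟩

theorem concaveOn_log_one_sub : ConcaveOn ℝ (Iio 1) fun z : ℝ => log (1 - z) := by
  have h := strictConcaveOn_log_Ioi.concaveOn.comp_affineMap
    (AffineMap.const ℝ ℝ (1 : ℝ) - AffineMap.id ℝ ℝ)
  have hset : ⇑(AffineMap.const ℝ ℝ (1 : ℝ) - AffineMap.id ℝ ℝ) ⁻¹' Ioi 0 = Iio 1 := by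
    ext z; simp
  rwa [hset] at h

/-- With `z = e^{-λ(T-t)}` and `a = μ/λ`, `activationBenefit γ d a z = -p̄₀(t)`. -/
noncomputable def activationBenefit (γ : ℝ) (d : ℕ) (a z : ℝ) : ℝ := γ * (1 - z) ^ d * z ^ a

section activationBenefit

variable {γ : ℝ} {d : ℕ} {a z : ℝ}

theorem activationBenefit_pos (hγ : 0 < γ) (hz : z ∈ Ioo 0 1) :
    0 < activationBenefit γ d a z :=
  mul_pos (mul_pos hγ (pow_pos (sub_pos.2 hz.2) d)) (rpow_pos_of_pos hz.1 a)

theorem activationBenefit_zero (ha : a ≠ 0) : activationBenefit γ d a 0 = 0 := by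
  simp [activationBenefit, zero_rpow ha]

theorem activationBenefit_one (hd : d ≠ 0) : activationBenefit γ d a 1 = 0 := by
  simp [activationBenefit, hd]

theorem continuous_activationBenefit (ha : 0 ≤ a) : Continuous (activationBenefit γ d a) :=
  (continuous_const.mul ((continuous_const.sub continuous_id).pow d)).mul
    (continuous_rpow_const ha)

theorem log_activationBenefit (hγ : 0 < γ) (hz : z ∈ Ioo 0 1) :
    log (activationBenefit γ d a z) = log γ + (d * log (1 - z) + a * log z) := by
  have h1z := pow_pos (sub_pos.2 hz.2) d
  rw [activationBenefit, log_mul (mul_pos hγ h1z).ne' (rpow_pos_of_pos hz.1 a).ne',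
    log_mul hγ.ne' h1z.ne', log_pow, log_rpow hz.1]
  ring

theorem concaveOn_log_activationBenefit (hγ : 0 < γ) (ha : 0 ≤ a) :
    ConcaveOn ℝ (Ioo 0 1) fun z => log (activationBenefit γ d a z) := by
  have hsum : ConcaveOn ℝ (Ioo 0 1) fun z : ℝ => d * log (1 - z) + a * log z :=
    ((concaveOn_log_one_sub.subset (fun z hz => hz.2) (convex_Ioo 0 1)).smul d.cast_nonneg).add
      ((strictConcaveOn_log_Ioi.concaveOn.subset (fun z hz => hz.1) (convex_Ioo 0 1)).smul ha)
  exact (hsum.add_const (log γ)).congr fun z hz => by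
    rw [log_activationBenefit hγ hz, add_comm]; rfl

theorem convex_superlevel_activationBenefit (hγ : 0 < γ) (ha : 0 ≤ a) {c : ℝ} (hc : 0 < c) :
    Convex ℝ {z ∈ Ioo 0 1 | c < activationBenefit γ d a z} := by
  have hset : {z ∈ Ioo 0 1 | c < activationBenefit γ d a z} =
      {z ∈ Ioo 0 1 | log c < log (activationBenefit γ d a z)} :=
    sep_ext_iff.2 fun z hz => (log_lt_log_iff hc (activationBenefit_pos hγ hz)).symm
  rw [hset]
  exact (concaveOn_log_activationBenefit hγ ha).convex_gt _

theorem superlevel_activationBenefit_eq_empty_or_Ioo (hγ : 0 < γ) (hd : d ≠ 0) (ha : 0 < a)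
    {c : ℝ} (hc : 0 < c) :
    {z ∈ Ioo 0 1 | c < activationBenefit γ d a z} = ∅ ∨
      ∃ zon zoff : ℝ, zon ∈ Ioo 0 1 ∧ zoff ∈ Ioo 0 1 ∧ zon < zoff ∧
        activationBenefit γ d a zon = c ∧ activationBenefit γ d a zoff = c ∧
        {z ∈ Ioo 0 1 | c < activationBenefit γ d a z} = Ioo zon zoff := by
  set U := {z ∈ Ioo 0 1 | c < activationBenefit γ d a z}
  refine U.eq_empty_or_nonempty.imp_right fun hne => ?_
  have hcont := continuous_activationBenefit (γ := γ) (d := d) ha.le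
  have hopen : IsOpen U := isOpen_Ioo.inter (isOpen_lt continuous_const hcont)
  have hU : U = Ioo (sInf U) (sSup U) :=
    hopen.eq_Ioo_csInf_csSup ⟨hne, (convex_superlevel_activationBenefit hγ ha.le hc).isPreconnected⟩
      (bddBelow_Ioo.mono (sep_subset _ _)) (bddAbove_Ioo.mono (sep_subset _ _))
  have hlt : sInf U < sSup U := nonempty_Ioo.1 (hU ▸ hne)
  obtain ⟨hon, hoff, hfon, hfoff⟩ := hcont.endpoints_of_superlevel_eq_Ioo
    (by rwa [activationBenefit_zero ha.ne']) (by rwa [activationBenefit_one hd]) hlt hU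
  exact ⟨_, _, hon, hoff, hlt, hfon, hfoff, hU⟩

theorem lt_activationBenefit_iff (hγ : 0 < γ) (hd : d ≠ 0) (hz : z ∈ Ioo 0 1) {c : ℝ}
    (hc : 0 < c) :
    c < activationBenefit γ d a z ↔ -(a * log z) < d * log ((γ / c) ^ (1 / (d : ℝ)) * (1 - z)) := by
  have hrhs : d * log ((γ / c) ^ (1 / (d : ℝ)) * (1 - z)) = log γ - log c + d * log (1 - z) := by
    have : (d : ℝ) ≠ 0 := Nat.cast_ne_zero.2 hd
    rw [log_mul (by positivity) (sub_pos.2 hz.2).ne', log_rpow (div_pos hγ hc),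
      log_div hγ.ne' hc.ne']
    field_simp
  rw [← log_lt_log_iff hc (activationBenefit_pos hγ hz), log_activationBenefit hγ hz, hrhs]
  constructor <;> intro h <;> linarith

end activationBenefit

section timeChange

variable {l T t : ℝ}

theorem exp_neg_mul_sub_lt_one_iff (hl : 0 < l) : exp (-l * (T - t)) < 1 ↔ t < T := by
  rw [exp_lt_one_iff, neg_mul, neg_lt_zero, mul_pos_iff_of_pos_left hl, sub_pos]

theorem preimage_exp_neg_mul_sub_Ioo (hl : 0 < l) {z₁ z₂ : ℝ} (hz₁ : 0 < z₁) (hz₂ : 0 < z₂) :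
    (fun t => exp (-l * (T - t))) ⁻¹' Ioo z₁ z₂ =
      Ioo (T + 1 / l * log z₁) (T + 1 / l * log z₂) := by
  ext t
  have hlower : T + 1 / l * log z₁ < t ↔ log z₁ < -l * (T - t) := by
    rw [← lt_sub_iff_add_lt', one_div, inv_mul_lt_iff₀ hl]; ring_nf
  have hupper : t < T + 1 / l * log z₂ ↔ -l * (T - t) < log z₂ := by
    rw [← sub_lt_iff_lt_add', one_div, lt_inv_mul_iff₀ hl]; ring_nf
  rw [mem_preimage, mem_Ioo, mem_Ioo, hlower, hupper, lt_log_iff_exp_lt hz₂,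
    log_lt_iff_lt_exp hz₁]

end timeChange

/-- Structure of the activation set in the pure-activation-cost case:
with `p̄₀(t) = -γ(1-e^{-λ(T-t)})^d e^{-μ(T-t)}`,
(a) for `t < T`, `p̄₀(t) < -c₁` iff `z = e^{-λ(T-t)}` satisfies `γ(1-z)^d z^{μ/λ} > c₁`;
(b) the set `S = {t ≤ T : p̄₀(t) < -c₁}` is empty or an open interval
`(T + (1/λ) ln z_on, T + (1/λ) ln z_off)` with right endpoint `< T`, for the two
solutions `z_on < z_off` in `(0,1)` of `γ(1-z)^d z^{μ/λ} = c₁`;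
(c) `0 ∈ S` iff `μ T < d ln((γ/c₁)^{1/d}(1-e^{-λ T}))`. -/
theorem pure_activation_threshold_structure
    (d : ℕ) (hd : 1 ≤ d) (l μ γ c₁ T : ℝ)
    (hl : 0 < l) (hμ : 0 < μ) (hγ : 0 < γ) (hc₁ : 0 < c₁) (hT : 0 < T)
    (p₀ : ℝ → ℝ)
    (hp : ∀ t : ℝ, p₀ t = -γ * (1 - Real.exp (-l * (T - t))) ^ d * Real.exp (-μ * (T - t)))
    (S : Set ℝ) (hS : S = {t : ℝ | t ≤ T ∧ p₀ t < -c₁}) :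
    (∀ t : ℝ, t < T →
      (p₀ t < -c₁ ↔
        c₁ < γ * (1 - Real.exp (-l * (T - t))) ^ d * Real.exp (-l * (T - t)) ^ (μ / l))) ∧
    (S = ∅ ∨
      ∃ zon zoff : ℝ,
        zon ∈ Set.Ioo (0 : ℝ) 1 ∧ zoff ∈ Set.Ioo (0 : ℝ) 1 ∧ zon < zoff ∧
        γ * (1 - zon) ^ d * zon ^ (μ / l) = c₁ ∧
        γ * (1 - zoff) ^ d * zoff ^ (μ / l) = c₁ ∧
        T + (1 / l) * Real.log zoff < T ∧
        S = Set.Ioo (T + (1 / l) * Real.log zon) (T + (1 / l) * Real.log zoff)) ∧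
    ((0 : ℝ) ∈ S ↔
      μ * T < (d : ℝ) * Real.log ((γ / c₁) ^ (1 / (d : ℝ)) * (1 - Real.exp (-l * T)))) := by
  have hd₀ : d ≠ 0 := by omega
  set e : ℝ → ℝ := fun t => exp (-l * (T - t))
  have hp' : ∀ t, p₀ t = -activationBenefit γ d (μ / l) (e t) := fun t => by
    have hexp : -l * (T - t) * (μ / l) = -μ * (T - t) := by field_simp
    rw [hp, show e t = exp (-l * (T - t)) from rfl, activationBenefit, ← exp_mul, hexp]
    ring
  have hA : ∀ t, p₀ t < -c₁ ↔ c₁ < activationBenefit γ d (μ / l) (e t) := fun t => by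
    rw [hp', neg_lt_neg_iff]
  have hSU : S = e ⁻¹' {z ∈ Ioo 0 1 | c₁ < activationBenefit γ d (μ / l) z} := by
    ext t
    simp only [hS, mem_ofPred_eq, mem_preimage, hA, mem_Ioo, e, exp_pos, true_and,
      exp_neg_mul_sub_lt_one_iff hl]
    refine ⟨fun ⟨htT, h⟩ => ⟨htT.lt_of_ne ?_, h⟩, fun ⟨htT, h⟩ => ⟨htT.le, h⟩⟩
    rintro rfl
    rw [sub_self, mul_zero, exp_zero, activationBenefit_one hd₀] at h
    exact (hc₁.trans h).false
  refine ⟨fun t _ => hA t, ?_, ?_⟩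
  · rcases superlevel_activationBenefit_eq_empty_or_Ioo hγ hd₀ (div_pos hμ hl) hc₁ with
      hU | ⟨zon, zoff, hon, hoff, hlt, hfon, hfoff, hU⟩
    · left; rw [hSU, hU, preimage_empty]
    · refine Or.inr ⟨zon, zoff, hon, hoff, hlt, hfon, hfoff, ?_, ?_⟩
      · linarith [mul_neg_of_pos_of_neg (one_div_pos.2 hl) (log_neg hoff.1 hoff.2)]
      · rw [hSU, hU, preimage_exp_neg_mul_sub_Ioo hl hon.1 hoff.1]
  · have he₀ : e 0 = exp (-l * T) := by simp [e]
    have hz : e 0 ∈ Ioo 0 1 := ⟨exp_pos _, (exp_neg_mul_sub_lt_one_iff hl).2 hT⟩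
    have hlog : μ / l * log (e 0) = -(μ * T) := by
      rw [he₀, log_exp]; field_simp
    rw [hSU, mem_preimage, mem_sep_iff, and_iff_right hz,
      lt_activationBenefit_iff hγ hd₀ hz hc₁, hlog, neg_neg, he₀]
end

section
/- Let d ≥ 1 be an integer, λ > 0, μ > 0, and c ≥ 0 real numbers, and let I ⊆ ℝ be a nondegenerate interval. Suppose p_0, …, p_d : I → ℝ are differentiable and satisfy p_k'(t) = (μ + λ(d-k)) p_k(t) - (d-k) λ p_{k+1}(t) - c (d-k) for all 0 ≤ k ≤ d−1 and p_d'(t) = μ p_d(t), for every t ∈ I. If p_0 is constant on I, then p_0(t) ≥ 0 for all t ∈ I; in particular, for any c₁ > 0, p_0 cannot be identically equal to −c₁ on I. -/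
/-!
On an open subinterval `U` of `I`, a function that is constant has zero derivative. Since the
coupling coefficient `(d - k) λ` of `p_{k+1}` in the equation for `p_k` is nonzero, constancy of
`p_k` on `U` forces constancy of `p_{k+1}`, so all costates are constant on `U` and the right-hand
sides of the adjoint system vanish there. The last equation gives `p_d = 0`, and going back up the
chain, `p_k = ((d - k) λ p_{k+1} + c (d - k)) / (μ + (d - k) λ)` is nonnegative whenever `p_{k+1}` is.
-/

open Set Filter

theorem HasDerivAt.eq_zero_of_forall_mem_eq {f : ℝ → ℝ} {U : Set ℝ} (hU : IsOpen U) {t v : ℝ}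
    (ht : t ∈ U) (hf : ∀ s ∈ U, f s = f t) (hv : HasDerivAt f v t) : v = 0 :=
  (hv.congr_of_eventuallyEq (eventuallyEq_of_mem (hU.mem_nhds ht) fun s hs => (hf s hs).symm)).unique
    (hasDerivAt_const t (f t))

section AffineChain

variable {U : Set ℝ} {d : ℕ} {p : ℕ → ℝ → ℝ} {α β γ : ℕ → ℝ}

theorem affineChain_forall_mem_eq (hU : IsOpen U) (hβ : ∀ k < d, β k ≠ 0)
    (hp : ∀ k < d, ∀ t ∈ U, HasDerivAt (p k) (α k * p k t - β k * p (k + 1) t - γ k) t)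
    (h0 : ∀ s ∈ U, ∀ t ∈ U, p 0 s = p 0 t) :
    ∀ k ≤ d, ∀ s ∈ U, ∀ t ∈ U, p k s = p k t := by
  intro k
  induction k with
  | zero => exact fun _ => h0
  | succ k ih =>
    intro hk s hs t ht
    have hconst := ih (Nat.le_of_succ_le hk)
    have hrhs : ∀ u ∈ U, α k * p k u - β k * p (k + 1) u - γ k = 0 := fun u hu =>
      (hp k hk u hu).eq_zero_of_forall_mem_eq hU hu fun s hs => hconst s hs u hu
    have hβs : β k * p (k + 1) s = β k * p (k + 1) t := by
      have hrhs_s := hrhs s hs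
      rw [hconst s hs t ht] at hrhs_s
      linarith [hrhs t ht]
    exact mul_left_cancel₀ (hβ k hk) hβs

theorem affineChain_nonneg {x : ℕ → ℝ} (hα : ∀ k < d, 0 < α k) (hβ : ∀ k < d, 0 ≤ β k)
    (hγ : ∀ k < d, 0 ≤ γ k) (hx : ∀ k < d, α k * x k - β k * x (k + 1) - γ k = 0)
    (hd : 0 ≤ x d) : 0 ≤ x 0 := by
  suffices ∀ m ≤ d, 0 ≤ x m from this 0 d.zero_le
  intro m hm
  induction hm using Nat.decreasingInduction with
  | self => exact hd
  | of_succ k hk ih =>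
    have hαx : 0 ≤ α k * x k := by
      linarith [hx k hk, mul_nonneg (hβ k hk) ih, hγ k hk]
    exact nonneg_of_mul_nonneg_right hαx (hα k hk)

end AffineChain

theorem adjoint_no_singular_arc_general
    (d : ℕ) (l μ c : ℝ) (hl : 0 < l) (hμ : 0 < μ) (hc : 0 ≤ c)
    (I : Set ℝ) (hI : I.OrdConnected) (hI2 : ∃ a ∈ I, ∃ b ∈ I, a < b)
    (p : ℕ → ℝ → ℝ)
    (hpk : ∀ k, k < d → ∀ t ∈ I,
      HasDerivAt (p k)
        ((μ + l * ((d - k : ℕ) : ℝ)) * p k t - ((d - k : ℕ) : ℝ) * l * p (k + 1) t -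
          c * ((d - k : ℕ) : ℝ)) t)
    (hpd : ∀ t ∈ I, HasDerivAt (p d) (μ * p d t) t)
    (hconst : ∀ t ∈ I, ∀ t' ∈ I, p 0 t = p 0 t') :
    (∀ t ∈ I, 0 ≤ p 0 t) ∧
    ∀ c₁ : ℝ, 0 < c₁ → ¬(∀ t ∈ I, p 0 t = -c₁) := by
  obtain ⟨a, ha, b, hb, hab⟩ := hI2
  have hUI : Ioo a b ⊆ I := Ioo_subset_Icc_self.trans (hI.out ha hb)
  obtain ⟨t₀, ht₀⟩ : (Ioo a b).Nonempty := nonempty_Ioo.mpr hab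
  have hgap : ∀ k < d, (0 : ℝ) < ((d - k : ℕ) : ℝ) := fun k hk => by
    exact_mod_cast Nat.sub_pos_of_lt hk
  have hpkU : ∀ k < d, ∀ t ∈ Ioo a b, HasDerivAt (p k) (_ * p k t - _ * p (k + 1) t - _) t :=
    fun k hk t ht => hpk k hk t (hUI ht)
  have hconstU : ∀ k ≤ d, ∀ s ∈ Ioo a b, p k s = p k t₀ := fun k hk s hs =>
    affineChain_forall_mem_eq isOpen_Ioo (fun k hk => (mul_pos (hgap k hk) hl).ne') hpkU
      (fun s hs t ht => hconst s (hUI hs) t (hUI ht)) k hk s hs t₀ ht₀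
  have hpd₀ : p d t₀ = 0 := (mul_eq_zero.mp ((hpd t₀ (hUI ht₀)).eq_zero_of_forall_mem_eq
    isOpen_Ioo ht₀ (hconstU d le_rfl))).resolve_left hμ.ne'
  have hp₀ : 0 ≤ p 0 t₀ := affineChain_nonneg (x := fun k => p k t₀)
    (fun k hk => by have := hgap k hk; positivity) (fun k hk => (mul_pos (hgap k hk) hl).le)
    (fun k hk => mul_nonneg hc (hgap k hk).le)
    (fun k hk => (hpkU k hk t₀ ht₀).eq_zero_of_forall_mem_eq isOpen_Ioo ht₀ (hconstU k hk.le))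
    hpd₀.ge
  have hnonneg : ∀ t ∈ I, 0 ≤ p 0 t := fun t ht => hconst t ht t₀ (hUI ht₀) ▸ hp₀
  exact ⟨hnonneg, fun c₁ _ h => by linarith [h t₀ (hUI ht₀), hnonneg t₀ (hUI ht₀)]⟩

/-- Rigidity of the adjoint (costate) system: if the costate variables satisfy
the adjoint ODEs on a nondegenerate interval `I` and `p₀` is constant on `I`,
then `p₀ ≥ 0` on `I`; in particular `p₀` cannot be identically `-c₁ < 0`
(no singular arcs). -/
theorem adjoint_no_singular_arc
    (d : ℕ) (hd : 1 ≤ d) (l μ c : ℝ) (hl : 0 < l) (hμ : 0 < μ) (hc : 0 ≤ c)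
    (I : Set ℝ) (hI : I.OrdConnected) (hI2 : ∃ a ∈ I, ∃ b ∈ I, a < b)
    (p : ℕ → ℝ → ℝ)
    (hpk : ∀ k, k < d → ∀ t ∈ I,
      HasDerivAt (p k)
        ((μ + l * ((d - k : ℕ) : ℝ)) * p k t - ((d - k : ℕ) : ℝ) * l * p (k + 1) t -
          c * ((d - k : ℕ) : ℝ)) t)
    (hpd : ∀ t ∈ I, HasDerivAt (p d) (μ * p d t) t)
    (hconst : ∀ t ∈ I, ∀ t' ∈ I, p 0 t = p 0 t') :
    (∀ t ∈ I, 0 ≤ p 0 t) ∧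
    ∀ c₁ : ℝ, 0 < c₁ → ¬(∀ t ∈ I, p 0 t = -c₁) :=
  adjoint_no_singular_arc_general d l μ c hl hμ hc I hI hI2 p hpk hpd hconst
end

section
/- Let d ≥ 2 be an integer and λ > 0, μ > 0, γ > 0, T > 0, C ≥ 0 real numbers, and define p₀ : [0,T] → ℝ by p₀(t) = -γ (1 - e^{-λ(T-t)})^d e^{-μ(T-t)} + (C/(μ+λ)) (1 - e^{-(μ+λ)(T-t)}). Then there exist 0 ≤ t_m ≤ t_M ≤ T such that p₀ is nonincreasing on [0, t_m], nondecreasing on [t_m, t_M], and nonincreasing on [t_M, T]. -/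
/-!
Put `x = e^{-λ(T-t)}`, which increases with `t` and lies in `(0,1)` for `t < T`. Then
`p₀'(t) = e^{-μ(T-t)} x (1-x)^{d-1} (γ(dλ+μ) - ψ(x))` with `ψ(x) = γμ/x + C/(1-x)^{d-1}`.
Since `ψ` is convex on `(0,1)`, its sublevel set `{ψ ≤ γ(dλ+μ)}` is an interval, so the times
in `(0,T)` where `p₀' ≥ 0` form an interval as well: `p₀` decreases before it, increases on it
and decreases after it.
-/

open Real Set

theorem exists_antitoneOn_monotoneOn_antitoneOn_of_ordConnected {f f' : ℝ → ℝ} {a b : ℝ}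
    (hab : a ≤ b) (hf : ∀ t, HasDerivAt f (f' t) t)
    (hS : {t ∈ Ioo a b | 0 ≤ f' t}.OrdConnected) :
    ∃ tm tM, a ≤ tm ∧ tm ≤ tM ∧ tM ≤ b ∧
      AntitoneOn f (Icc a tm) ∧ MonotoneOn f (Icc tm tM) ∧ AntitoneOn f (Icc tM b) := by
  set S := {t ∈ Ioo a b | 0 ≤ f' t}
  have anti : ∀ c e, (∀ t ∈ Ioo c e, f' t ≤ 0) → AntitoneOn f (Icc c e) := fun c e h =>
    antitoneOn_of_hasDerivWithinAt_nonpos (convex_Icc c e)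
      (fun t _ => (hf t).continuousAt.continuousWithinAt) (fun t _ => (hf t).hasDerivWithinAt)
      (by rwa [interior_Icc])
  have mono : ∀ c e, (∀ t ∈ Ioo c e, 0 ≤ f' t) → MonotoneOn f (Icc c e) := fun c e h =>
    monotoneOn_of_hasDerivWithinAt_nonneg (convex_Icc c e)
      (fun t _ => (hf t).continuousAt.continuousWithinAt) (fun t _ => (hf t).hasDerivWithinAt)
      (by rwa [interior_Icc])
  have nonpos_of_notMem : ∀ t ∈ Ioo a b, t ∉ S → f' t ≤ 0 := fun t ht htS =>
    le_of_lt (not_le.1 fun h => htS ⟨ht, h⟩)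
  rcases S.eq_empty_or_nonempty with hS0 | hne
  · refine ⟨b, b, hab, le_rfl, le_rfl, anti a b fun t ht => ?_, mono b b (by simp),
      anti b b (by simp)⟩
    exact nonpos_of_notMem t ht (hS0 ▸ notMem_empty t)
  have hbelow : BddBelow S := ⟨a, fun t ht => ht.1.1.le⟩
  have habove : BddAbove S := ⟨b, fun t ht => ht.1.2.le⟩
  have ha : a ≤ sInf S := le_csInf hne fun t ht => ht.1.1.le
  have hb : sSup S ≤ b := csSup_le hne fun t ht => ht.1.2.le
  refine ⟨sInf S, sSup S, ha, csInf_le_csSup hne hbelow habove, hb, anti _ _ ?_, mono _ _ ?_,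
    anti _ _ ?_⟩
  · intro t ht
    refine nonpos_of_notMem t ⟨ht.1, ht.2.trans_le ((csInf_le_csSup hne hbelow habove).trans hb)⟩
      fun htS => (csInf_le hbelow htS).not_gt ht.2
  · exact fun t ht => (IsConnected.Ioo_csInf_csSup_subset ⟨hne, hS.isPreconnected⟩
      hbelow habove ht).2
  · intro t ht
    refine nonpos_of_notMem t ⟨(ha.trans (csInf_le_csSup hne hbelow habove)).trans_lt ht.1, ht.2⟩
      fun htS => (le_csSup habove htS).not_gt ht.1

noncomputable def costateBarrier (n : ℕ) (a b x : ℝ) : ℝ := a / x + b / (1 - x) ^ n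

theorem convexOn_costateBarrier (n : ℕ) {a b : ℝ} (ha : 0 ≤ a) (hb : 0 ≤ b) :
    ConvexOn ℝ (Ioo 0 1) (costateBarrier n a b) := by
  have hinv : ConvexOn ℝ (Ioi 0) fun x : ℝ => x⁻¹ := by
    simpa using convexOn_zpow (𝕜 := ℝ) (-1)
  have hpow : ConvexOn ℝ (Iio 1) fun x : ℝ => ((1 - x) ^ n)⁻¹ := by
    have := (convexOn_zpow (𝕜 := ℝ) (-(n : ℤ))).comp_affineMap
      (AffineMap.const ℝ ℝ 1 - AffineMap.id ℝ ℝ)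
    simp only [AffineMap.coe_sub, AffineMap.coe_const, AffineMap.coe_id, Function.comp_def,
      Pi.sub_apply, Function.const_apply, id, zpow_neg, zpow_natCast] at this
    have hpre : (Function.const ℝ (1 : ℝ) - id) ⁻¹' Ioi 0 = Iio 1 := by ext; simp [sub_pos]
    rwa [hpre] at this
  exact (((hinv.subset Ioo_subset_Ioi_self (convex_Ioo 0 1)).smul ha).add
    ((hpow.subset Ioo_subset_Iio_self (convex_Ioo 0 1)).smul hb)).congr
      fun x _ => by simp [costateBarrier, div_eq_mul_inv]

noncomputable def costate (d : ℕ) (l μ γ T C t : ℝ) : ℝ :=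
  -γ * (1 - exp (-l * (T - t))) ^ d * exp (-μ * (T - t)) +
    C / (μ + l) * (1 - exp (-(μ + l) * (T - t)))

def costateDerivFactor (d : ℕ) (l μ γ C x : ℝ) : ℝ :=
  γ * (1 - x) ^ (d - 1) * ((d * l + μ) * x - μ) - C * x

theorem hasDerivAt_exp_neg_mul_sub (c T t : ℝ) :
    HasDerivAt (fun t => exp (-c * (T - t))) (c * exp (-c * (T - t))) t := by
  simpa [mul_comm] using (((hasDerivAt_id t).const_sub T).const_mul (-c)).exp

theorem hasDerivAt_costate {d : ℕ} (hd : d ≠ 0) {l μ : ℝ} (hμl : μ + l ≠ 0) (γ T C t : ℝ) :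
    HasDerivAt (costate d l μ γ T C)
      (exp (-μ * (T - t)) * costateDerivFactor d l μ γ C (exp (-l * (T - t)))) t := by
  have hE := hasDerivAt_exp_neg_mul_sub l T t
  have hF := hasDerivAt_exp_neg_mul_sub μ T t
  have hG := hasDerivAt_exp_neg_mul_sub (μ + l) T t
  refine ((((hE.const_sub 1).pow d).const_mul (-γ)).mul hF |>.add
    ((hG.const_sub 1).const_mul (C / (μ + l)))).congr_deriv ?_
  have hEF : exp (-(μ + l) * (T - t)) = exp (-l * (T - t)) * exp (-μ * (T - t)) := by
    rw [← exp_add]; ring_nf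
  obtain ⟨n, rfl⟩ := Nat.exists_eq_add_one_of_ne_zero hd
  rw [hEF, costateDerivFactor]
  simp only [Pi.pow_apply]
  field_simp
  push_cast
  ring

theorem costateDerivFactor_eq {x : ℝ} (hx : x ∈ Ioo 0 1) (d : ℕ) (l μ γ C : ℝ) :
    costateDerivFactor d l μ γ C x =
      x * (1 - x) ^ (d - 1) * (γ * (d * l + μ) - costateBarrier (d - 1) (γ * μ) C x) := by
  have hx0 : x ≠ 0 := hx.1.ne'
  have hx1 : (1 - x) ^ (d - 1) ≠ 0 := pow_ne_zero _ (sub_ne_zero.2 hx.2.ne')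
  rw [costateDerivFactor, costateBarrier]
  field_simp
  ring

theorem costateDerivFactor_nonneg_iff {x : ℝ} (hx : x ∈ Ioo 0 1) (d : ℕ) (l μ γ C : ℝ) :
    0 ≤ costateDerivFactor d l μ γ C x ↔
      costateBarrier (d - 1) (γ * μ) C x ≤ γ * (d * l + μ) := by
  rw [costateDerivFactor_eq hx, mul_nonneg_iff_of_pos_left
    (mul_pos hx.1 (pow_pos (sub_pos.2 hx.2) _)), sub_nonneg]

theorem ordConnected_costate_deriv_nonneg (d : ℕ) {l μ γ C : ℝ} (hl : 0 < l) (hμ : 0 ≤ μ)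
    (hγ : 0 ≤ γ) (hC : 0 ≤ C) (T : ℝ) :
    {t ∈ Ioo 0 T | 0 ≤ exp (-μ * (T - t)) *
      costateDerivFactor d l μ γ C (exp (-l * (T - t)))}.OrdConnected := by
  set E : ℝ → ℝ := fun t => exp (-l * (T - t))
  have hE : ∀ t < T, E t ∈ Ioo 0 1 := fun t ht =>
    ⟨exp_pos _, exp_lt_one_iff.2 (by nlinarith)⟩
  have hEmono : Monotone E := fun s t hst => exp_le_exp.2 (by nlinarith)
  have hsublevel := ((convexOn_costateBarrier (d - 1) (mul_nonneg hγ hμ) hC).convex_le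
    (γ * (d * l + μ))).ordConnected
  convert ordConnected_Ioo.inter (hsublevel.preimage_mono hEmono) using 1
  ext t
  simp only [mem_ofPred_eq, mem_inter_iff, mem_preimage]
  refine and_congr_right fun ht => ?_
  rw [mul_nonneg_iff_of_pos_left (exp_pos _), costateDerivFactor_nonneg_iff (hE t ht.2)]
  exact (and_iff_right (hE t ht.2)).symm

/-- Decreasing–increasing–decreasing shape of the costate variable
`p₀(t) = -γ(1-e^{-λ(T-t)})^d e^{-μ(T-t)} + (C/(μ+λ))(1-e^{-(μ+λ)(T-t)})`
on `[0,T]`. -/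
theorem costate_shape
    (d : ℕ) (hd : 2 ≤ d) (l μ γ T C : ℝ)
    (hl : 0 < l) (hμ : 0 < μ) (hγ : 0 < γ) (hT : 0 < T) (hC : 0 ≤ C)
    (p₀ : ℝ → ℝ)
    (hp : ∀ t : ℝ, p₀ t =
      -γ * (1 - Real.exp (-l * (T - t))) ^ d * Real.exp (-μ * (T - t)) +
        (C / (μ + l)) * (1 - Real.exp (-(μ + l) * (T - t)))) :
    ∃ tm tM : ℝ, 0 ≤ tm ∧ tm ≤ tM ∧ tM ≤ T ∧
      AntitoneOn p₀ (Set.Icc 0 tm) ∧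
      MonotoneOn p₀ (Set.Icc tm tM) ∧
      AntitoneOn p₀ (Set.Icc tM T) := by
  obtain rfl : p₀ = costate d l μ γ T C := funext hp
  exact exists_antitoneOn_monotoneOn_antitoneOn_of_ordConnected hT.le
    (hasDerivAt_costate (by omega) (by positivity) γ T C)
    (ordConnected_costate_deriv_nonneg d hl hμ.le hγ.le hC T)
end
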